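/- For every integer m ≥ 1 with m not congruent to 1 modulo 3 (i.e., m of the form 3n−1 or 3n), the graph I_{⌈m/2⌉}(P_m), where ⌈m/2⌉ is the independence number of the path P_m on m vertices, is not Hamiltonian. -/

import Mathlib

/-- A finset of vertices is independent if no two of its members are adjacent. -/
def IsIndep {V : Type*} (G : SimpleGraph V) (s : Finset V) : Prop :=
  ∀ u ∈ s, ∀ v ∈ s, ¬ G.Adj u v

/-- The `k`-independent graph of `G`: vertices are the independent sets of cardinality at most
`k`, two of them adjacent iff one is obtained from the other by adding a single vertex. -/
def indepGraph {V : Type*} (G : SimpleGraph V) (k : ℕ) :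
    SimpleGraph {s : Finset V // IsIndep G s ∧ s.card ≤ k} where
  Adj A B := (A.1 ⊆ B.1 ∧ B.1.card = A.1.card + 1) ∨ (B.1 ⊆ A.1 ∧ A.1.card = B.1.card + 1)
  symm := by
    constructor
    rintro A B (⟨h1, h2⟩ | ⟨h1, h2⟩)
    · exact Or.inr ⟨h1, h2⟩
    · exact Or.inl ⟨h1, h2⟩
  loopless := by
    constructor
    rintro A (⟨_, h⟩ | ⟨_, h⟩) <;> omega

noncomputable instance {V : Type*} [Fintype V] (G : SimpleGraph V) (k : ℕ) :
    Fintype {s : Finset V // IsIndep G s ∧ s.card ≤ k} :=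
  Fintype.ofFinite _

/-!
The parity of `#A` properly 2-colours `I_k(G)`, so along a Hamiltonian cycle the weight
`(-1) ^ #A` alternates and its sum over all vertices vanishes. Once `k` is at least the
independence number, that sum is `I(G; -1)`, the independence polynomial at `-1`. Embedding
`P_m` into the infinite path `hasse ℕ` as `{0, …, m - 1}`, deletion–contraction at the last
vertex gives `I(P_{m+2}; -1) = I(P_{m+1}; -1) - I(P_m; -1)`, so these values run through
`1, 0, -1, -1, 0, 1, …` and vanish exactly when `m ≡ 1 [MOD 3]`.
-/

open Finset SimpleGraph

namespace SimpleGraph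

variable {V : Type*} {G : SimpleGraph V}

lemma Walk.two_mul_sum_support_map (f : V → ℤ) (hf : ∀ u v, G.Adj u v → f u + f v = 0)
    {u w : V} (p : G.Walk u w) : 2 * (p.support.map f).sum = f u + f w := by
  induction p with
  | nil => simp only [Walk.support_nil, List.map_cons, List.map_nil, List.sum_cons,
      List.sum_nil]; ring
  | @cons u v w h q ih =>
    rw [Walk.support_cons, List.map_cons, List.sum_cons, mul_add, ih]
    linarith [hf u v h]

lemma Walk.IsHamiltonian.sum_support_map [Fintype V] [DecidableEq V] {u w : V} {p : G.Walk u w}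
    (hp : p.IsHamiltonian) (f : V → ℤ) : (p.support.map f).sum = ∑ v, f v := by
  rw [← List.sum_toFinset f hp.isPath.support_nodup, hp.toFinset_support]

lemma IsHamiltonian.sum_eq_zero [Fintype V] [DecidableEq V] [Nontrivial V]
    (hG : G.IsHamiltonian) (f : V → ℤ) (hf : ∀ u v, G.Adj u v → f u + f v = 0) :
    ∑ v, f v = 0 := by
  obtain ⟨v, -⟩ := exists_pair_ne V
  obtain ⟨p, hp⟩ := hG.exists_isHamiltonianCycle v
  have h := p.tail.two_mul_sum_support_map f hf
  rw [hp.isHamiltonian_tail.sum_support_map, hf _ _ (p.adj_snd hp.not_nil).symm] at h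
  omega

end SimpleGraph

section IsIndep

variable {V W : Type*} {G : SimpleGraph V} {s : Finset V}

lemma isIndep_empty (G : SimpleGraph V) : IsIndep G ∅ := by
  simp [IsIndep]

lemma isIndep_singleton (G : SimpleGraph V) (v : V) : IsIndep G {v} := by
  simp [IsIndep]

lemma isIndep_insert [DecidableEq V] {a : V} :
    IsIndep G (insert a s) ↔ IsIndep G s ∧ ∀ b ∈ s, ¬ G.Adj a b := by
  simp only [IsIndep, mem_insert, forall_eq_or_imp, SimpleGraph.irrefl, not_false_eq_true,
    true_and]
  constructor
  · rintro ⟨ha, hs⟩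
    exact ⟨fun u hu => (hs u hu).2, ha⟩
  · rintro ⟨hs, ha⟩
    exact ⟨ha, fun u hu => ⟨fun h => ha u hu h.symm, hs u hu⟩⟩

lemma isIndep_map_iff {H : SimpleGraph W} (f : G ↪g H) :
    IsIndep H (s.map f.toEmbedding) ↔ IsIndep G s := by
  simp [IsIndep]

end IsIndep

section indepAltSum

variable {V W : Type*}

open Classical in
/-- The independence polynomial of the induced subgraph `G[s]`, evaluated at `-1`. -/
noncomputable def indepAltSum (G : SimpleGraph V) (s : Finset V) : ℤ :=
  ∑ t ∈ s.powerset, if IsIndep G t then (-1) ^ #t else 0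

variable {G : SimpleGraph V}

@[simp]
lemma indepAltSum_empty : indepAltSum G ∅ = 1 := by
  simp [indepAltSum, isIndep_empty]

open Classical in
lemma indepAltSum_insert [DecidableEq V] {a : V} {s : Finset V} (ha : a ∉ s) :
    indepAltSum G (insert a s) = indepAltSum G s - indepAltSum G {b ∈ s | ¬ G.Adj a b} := by
  set F := {b ∈ s | ¬ G.Adj a b}
  set g : Finset V → ℤ := fun t => if IsIndep G t then (-1) ^ #t else 0
  have hterm : ∀ t ∈ s.powerset, g (insert a t) = -if t ⊆ F then g t else 0 := by
    intro t ht
    have hts : t ⊆ s := mem_powerset.mp ht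
    simp only [g]
    rw [card_insert_of_notMem (fun h => ha (hts h)), isIndep_insert, pow_succ]
    by_cases hsub : t ⊆ F
    · have hna : ∀ b ∈ t, ¬ G.Adj a b := fun b hb => (mem_filter.mp (hsub hb)).2
      rw [and_iff_left hna, if_pos hsub]
      split_ifs <;> ring
    · have : ¬ ∀ b ∈ t, ¬ G.Adj a b := fun h =>
        hsub fun b hb => mem_filter.mpr ⟨hts hb, h b hb⟩
      simp [this, hsub]
  have hF : ∑ t ∈ s.powerset, (if t ⊆ F then g t else 0) = indepAltSum G F := by
    rw [← sum_filter, indepAltSum]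
    congr 1
    ext t
    simp only [mem_filter, mem_powerset]
    exact ⟨fun h => h.2, fun h => ⟨h.trans (filter_subset _ _), h⟩⟩
  rw [indepAltSum, sum_powerset_insert ha, sum_congr rfl hterm, sum_neg_distrib, hF,
    ← sub_eq_add_neg]
  rfl

lemma indepAltSum_map {H : SimpleGraph W} (f : G ↪g H) (s : Finset V) :
    indepAltSum H (s.map f.toEmbedding) = indepAltSum G s := by
  have hpow : (s.map f.toEmbedding).powerset =
      s.powerset.map (mapEmbedding f.toEmbedding).toEmbedding := by
    ext u
    simp [subset_map_iff, eq_comm]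
  simp only [indepAltSum, hpow, sum_map]
  refine sum_congr rfl fun t _ => ?_
  simp only [RelEmbedding.coe_toEmbedding, mapEmbedding_apply, card_map]
  classical exact if_congr (isIndep_map_iff f) rfl rfl

end indepAltSum

section Path

lemma hasse_nat_adj {a b : ℕ} : (hasse ℕ).Adj a b ↔ a + 1 = b ∨ b + 1 = a := by
  simp [hasse_adj]

open Classical in
lemma filter_not_hasse_adj_range (n : ℕ) :
    {b ∈ range (n + 1) | ¬ (hasse ℕ).Adj (n + 1) b} = range n := by
  ext b
  simp only [mem_filter, mem_range, hasse_nat_adj]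
  omega

lemma indepAltSum_hasse_range_add_two (n : ℕ) :
    indepAltSum (hasse ℕ) (range (n + 2)) =
      indepAltSum (hasse ℕ) (range (n + 1)) - indepAltSum (hasse ℕ) (range n) := by
  rw [range_add_one, indepAltSum_insert notMem_range_self, filter_not_hasse_adj_range]

lemma indepAltSum_hasse_range_add_three (n : ℕ) :
    indepAltSum (hasse ℕ) (range (n + 3)) = -indepAltSum (hasse ℕ) (range n) := by
  rw [indepAltSum_hasse_range_add_two, indepAltSum_hasse_range_add_two n]
  ring

lemma indepAltSum_hasse_range_one : indepAltSum (hasse ℕ) (range 1) = 0 := by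
  rw [range_one, ← insert_empty, indepAltSum_insert (notMem_empty 0), filter_empty,
    indepAltSum_empty, sub_self]

lemma indepAltSum_hasse_range_three_mul (n : ℕ) :
    indepAltSum (hasse ℕ) (range (3 * n)) = (-1) ^ n := by
  induction n with
  | zero => simp
  | succ n ih => rw [mul_add_one, indepAltSum_hasse_range_add_three, ih, pow_succ]; ring

lemma indepAltSum_hasse_range_three_mul_add_one (n : ℕ) :
    indepAltSum (hasse ℕ) (range (3 * n + 1)) = 0 := by
  induction n with
  | zero => exact indepAltSum_hasse_range_one
  | succ n ih => rw [mul_add_one, add_right_comm, indepAltSum_hasse_range_add_three, ih, neg_zero]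

lemma indepAltSum_hasse_range_three_mul_add_two (n : ℕ) :
    indepAltSum (hasse ℕ) (range (3 * n + 2)) = -(-1) ^ n := by
  rw [indepAltSum_hasse_range_add_two, indepAltSum_hasse_range_three_mul_add_one,
    indepAltSum_hasse_range_three_mul, zero_sub]

lemma indepAltSum_hasse_range_ne_zero {m : ℕ} (hm : m % 3 ≠ 1) :
    indepAltSum (hasse ℕ) (range m) ≠ 0 := by
  obtain ⟨n, rfl | rfl⟩ : ∃ n, m = 3 * n ∨ m = 3 * n + 2 := ⟨m / 3, by omega⟩
  · simp [indepAltSum_hasse_range_three_mul]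
  · simp [indepAltSum_hasse_range_three_mul_add_two]

end Path

def pathGraphEmbeddingHasseNat (m : ℕ) : pathGraph m ↪g hasse ℕ where
  toEmbedding := Fin.valEmbedding
  map_rel_iff' := by simp [pathGraph_adj]

lemma indepAltSum_pathGraph (m : ℕ) :
    indepAltSum (pathGraph m) univ = indepAltSum (hasse ℕ) (range m) := by
  rw [← Nat.Iio_eq_range, ← Fin.map_valEmbedding_univ]
  exact (indepAltSum_map (pathGraphEmbeddingHasseNat m) univ).symm

lemma IsIndep.card_le_of_pathGraph {m : ℕ} {s : Finset (Fin m)} (hs : IsIndep (pathGraph m) s) :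
    #s ≤ (m + 1) / 2 := by
  have key : #s ≤ #(range ((m + 1) / 2)) := by
    refine card_le_card_of_injOn (fun x => x.val / 2) (fun x _ => ?_) fun x hx y hy hxy => ?_
    · simp only [coe_range, Set.mem_Iio]
      omega
    · by_contra hne
      refine hs x hx y hy (pathGraph_adj.mpr ?_)
      have := Fin.val_ne_of_ne hne
      simp only at hxy
      omega
  simpa using key

section indepGraph

variable {V : Type*} {G : SimpleGraph V} {k : ℕ}

lemma indepGraph_adj_neg_one_pow_card_add {A B : {s : Finset V // IsIndep G s ∧ #s ≤ k}}
    (h : (indepGraph G k).Adj A B) : (-1 : ℤ) ^ #A.1 + (-1) ^ #B.1 = 0 := by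
  rcases h with ⟨-, h⟩ | ⟨-, h⟩ <;> rw [h, pow_succ] <;> ring

lemma nontrivial_indepGraph [Nonempty V] (hk : 1 ≤ k) :
    Nontrivial {s : Finset V // IsIndep G s ∧ #s ≤ k} := by
  obtain ⟨v⟩ := ‹Nonempty V›
  refine ⟨⟨∅, isIndep_empty G, by simp⟩, ⟨{v}, isIndep_singleton G v, by simpa using hk⟩, ?_⟩
  simp [Subtype.ext_iff]

lemma sum_neg_one_pow_card_indepGraph [Fintype V] (hk : ∀ s, IsIndep G s → #s ≤ k) :
    ∑ A : {s : Finset V // IsIndep G s ∧ #s ≤ k}, (-1 : ℤ) ^ #A.1 = indepAltSum G univ := by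
  classical
  rw [indepAltSum, ← sum_filter]
  refine (sum_subtype _ (fun s => ?_) fun s => (-1 : ℤ) ^ #s).symm
  simpa using hk s

end indepGraph

theorem indepGraph_path_not_hamiltonian (m : ℕ) (hm : 1 ≤ m) (h3 : m % 3 ≠ 1) :
    ¬ (indepGraph (SimpleGraph.pathGraph m) ((m + 1) / 2)).IsHamiltonian := by
  intro hG
  have : Nonempty (Fin m) := ⟨⟨0, hm⟩⟩
  have := nontrivial_indepGraph (G := pathGraph m) (k := (m + 1) / 2) (by omega)
  have hsum := hG.sum_eq_zero (fun A => (-1 : ℤ) ^ #A.1) fun _ _ =>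
    indepGraph_adj_neg_one_pow_card_add
  rw [sum_neg_one_pow_card_indepGraph fun _ => IsIndep.card_le_of_pathGraph,
    indepAltSum_pathGraph] at hsum
  exact indepAltSum_hasse_range_ne_zero h3 hsum
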